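/- Let P be a full-support probability on 𝕊 and let V : 𝕊 → ℝ be monotone with V(s) > V(s^-) for every s ∈ 𝕊 (with V(empty list) = 0). Let μ⁽⁰⁾ be any internal attribution for V such that ν_P^{μ⁽⁰⁾}(s) > 0 for all s ∈ 𝕊, and define the iteration ν⁽ᵏ⁺¹⁾ := ν_P^{μ⁽ᵏ⁾} and μ⁽ᵏ⁺¹⁾ := μ_{ν⁽ᵏ⁺¹⁾} (the fixed-point attribution of ν⁽ᵏ⁺¹⁾). Then for every s ∈ 𝕊 the sequence ν⁽ᵏ⁾(s) converges as k → ∞, and its limit is the core (additive) valuation: lim_{k→∞} ν⁽ᵏ⁾(s) = V(s) − V(s^-). -/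

import Mathlib

open Finset

namespace CoreAttr

variable (A : Type) [Fintype A] [DecidableEq A]

def listsLe : ℕ → Finset (List A)
  | 0 => {[]}
  | n + 1 => {[]} ∪ (Finset.univ ×ˢ listsLe n).image fun p : A × List A => p.1 :: p.2

theorem mem_listsLe (n : ℕ) (l : List A) : l ∈ listsLe A n ↔ l.length ≤ n := by
  induction n generalizing l with
  | zero => simp [listsLe, Nat.le_zero, List.length_eq_zero_iff]
  | succ n ih =>
    cases l with
    | nil => simp [listsLe]
    | cons a t => simp [listsLe, ih, Nat.succ_le_succ_iff]

/-- The set of scenarios: nonempty lists of actions of length at most `L`. -/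
def scenarios (L : ℕ) : Finset (List A) := (listsLe A L).filter fun s => s ≠ []

theorem mem_scenarios (L : ℕ) (l : List A) :
    l ∈ scenarios A L ↔ l ≠ [] ∧ l.length ≤ L := by
  simp [scenarios, mem_listsLe, and_comm]

variable {A}

/-- `P` is a probability on the finite set `𝕊`. -/
def IsProb (𝕊 : Finset (List A)) (P : List A → ℝ) : Prop :=
  (∀ s ∈ 𝕊, 0 ≤ P s) ∧ ∑ s ∈ 𝕊, P s = 1

def FullSupport (𝕊 : Finset (List A)) (P : List A → ℝ) : Prop :=
  ∀ s ∈ 𝕊, 0 < P s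

/-- `μ` is an internal attribution for the reward `V`. -/
def IsInternalAttr (𝕊 : Finset (List A)) (V : List A → ℝ) (μ : ℕ → List A → ℝ) : Prop :=
  (∀ i : ℕ, ∀ s ∈ 𝕊, 0 ≤ μ i s) ∧
  (∀ i : ℕ, ∀ s ∈ 𝕊, ¬(1 ≤ i ∧ i ≤ s.length) → μ i s = 0) ∧
  (∀ s ∈ 𝕊, ∑ i ∈ Finset.Icc 1 s.length, μ i s = V s)

/-- The valuation associated with attribution `μ` under probability `P`:
`ν_P^μ(s) = E_{S∼P}[μ(ℓ(s), S) | S ≽ s]`. -/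
noncomputable def assocVal (𝕊 : Finset (List A)) (P : List A → ℝ) (μ : ℕ → List A → ℝ)
    (s : List A) : ℝ :=
  (∑ s' ∈ 𝕊.filter (fun s' => s <+: s'), P s' * μ s.length s') /
    (∑ s' ∈ 𝕊.filter (fun s' => s <+: s'), P s')

/-- `Σ_{j=1}^{ℓ(s)} ν(s^j)`. -/
noncomputable def sumPrefix (ν : List A → ℝ) (s : List A) : ℝ :=
  ∑ j ∈ Finset.Icc 1 s.length, ν (s.take j)

/-- The fixed-point attribution `μ_ν`. -/
noncomputable def muFP (V ν : List A → ℝ) (i : ℕ) (s : List A) : ℝ :=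
  if 1 ≤ i ∧ i ≤ s.length then ν (s.take i) * V s / sumPrefix ν s else 0

/-- The MM objective `f`. -/
noncomputable def fObj (𝕊 : Finset (List A)) (P V ν : List A → ℝ) : ℝ :=
  ∑ s ∈ 𝕊, P s * (V s * Real.log (sumPrefix ν s) - sumPrefix ν s)

/-- The MM surrogate `g(ν | ν̂)`. -/
noncomputable def gSurr (𝕊 : Finset (List A)) (P V ν νh : List A → ℝ) : ℝ :=
  ∑ s ∈ 𝕊, P s * ∑ j ∈ Finset.Icc 1 s.length,
    (νh (s.take j) * V s / sumPrefix νh s *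
        Real.log (ν (s.take j) / νh (s.take j) * sumPrefix νh s) -
      ν (s.take j))

section Aux

variable {L : ℕ}

lemma take_mem_scen {s : List A} (hs : s ∈ scenarios A L) {j : ℕ} (hj : 1 ≤ j) :
    s.take j ∈ scenarios A L := by
  rw [mem_scenarios] at hs ⊢
  have h1 : 1 ≤ s.length := List.length_pos_iff.mpr hs.1
  have h2 : (s.take j).length = min j s.length := List.length_take
  constructor
  · intro h
    rw [h] at h2; simp at h2; omega
  · omega

lemma self_mem_filter {P : List A → Prop} [DecidablePred P] {s : List A}
    (hs : s ∈ scenarios A L) (h : P s) : s ∈ (scenarios A L).filter P :=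
  Finset.mem_filter.mpr ⟨hs, h⟩

lemma dropLast_mem {s : List A} (hs : s ∈ scenarios A L) (hne : s.dropLast ≠ []) :
    s.dropLast ∈ scenarios A L := by
  rw [mem_scenarios] at hs ⊢
  refine ⟨hne, ?_⟩
  rw [List.length_dropLast]; omega

/-- Key double-sum exchange over prefix pairs. -/
lemma sum_take_swap (f : List A → List A → ℝ) :
    ∑ s ∈ scenarios A L, ∑ j ∈ Finset.Icc 1 s.length, f s (s.take j)
      = ∑ p ∈ scenarios A L,
          ∑ s' ∈ (scenarios A L).filter (fun s' => p <+: s'), f s' p := by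
  rw [Finset.sum_sigma', Finset.sum_sigma']
  refine Finset.sum_nbij' (i := fun x => ⟨x.1.take x.2, x.1⟩)
    (j := fun y => ⟨y.2, y.1.length⟩) ?_ ?_ ?_ ?_ ?_
  · rintro ⟨s, j⟩ hx
    simp only [Finset.mem_sigma, Finset.mem_Icc, Finset.mem_filter] at hx ⊢
    exact ⟨take_mem_scen hx.1 hx.2.1, hx.1, List.take_prefix j s⟩
  · rintro ⟨p, s'⟩ hy
    simp only [Finset.mem_sigma, Finset.mem_Icc, Finset.mem_filter] at hy ⊢
    have hpne : p ≠ [] := ((mem_scenarios A L p).mp hy.1).1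
    exact ⟨hy.2.1, List.length_pos_iff.mpr hpne, hy.2.2.length_le⟩
  · rintro ⟨s, j⟩ hx
    simp only [Finset.mem_sigma, Finset.mem_Icc] at hx
    have : (s.take j).length = j := by
      rw [List.length_take]; omega
    simp [this]
  · rintro ⟨p, s'⟩ hy
    simp only [Finset.mem_sigma, Finset.mem_filter] at hy
    have : s'.take p.length = p := (List.prefix_iff_eq_take.mp hy.2.2).symm
    simp [this]
  · rintro ⟨s, j⟩ _; rfl

lemma take_dropLast {s : List A} {j : ℕ} (hj : j ≤ s.length) :
    (s.take j).dropLast = s.take (j - 1) := by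
  rw [List.dropLast_eq_take, List.take_take, List.length_take]
  congr 1
  omega

/-- Telescoping: the core valuation sums along prefixes to `V`. -/
lemma telescope (V : List A → ℝ) (hV0 : V [] = 0) {s : List A} (hs : s ∈ scenarios A L) :
    ∑ j ∈ Finset.Icc 1 s.length, (V (s.take j) - V ((s.take j).dropLast)) = V s := by
  have h : ∀ j ∈ Finset.Icc 1 s.length,
      V (s.take j) - V ((s.take j).dropLast) = V (s.take j) - V (s.take (j-1)) := by
    intro j hj
    rw [Finset.mem_Icc] at hj
    rw [take_dropLast hj.2]
  rw [Finset.sum_congr rfl h, ← Finset.Ico_add_one_right_eq_Icc, Finset.sum_Ico_eq_sum_range]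
  have h2 : ∀ i ∈ Finset.range (s.length + 1 - 1),
      V (s.take (1 + i)) - V (s.take (1 + i - 1))
        = V (s.take (i + 1)) - V (s.take i) := by
    intro i _
    congr 3 <;> omega
  rw [Finset.sum_congr rfl h2, Finset.sum_range_sub (fun i => V (s.take i))]
  simp [hV0, List.take_length]

lemma sumPrefix_pos {ν : List A → ℝ} (hpos : ∀ p ∈ scenarios A L, 0 < ν p)
    {s : List A} (hs : s ∈ scenarios A L) : 0 < sumPrefix ν s := by
  have h1 : 1 ≤ s.length := List.length_pos_iff.mpr ((mem_scenarios A L s).mp hs).1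
  refine Finset.sum_pos (fun j hj => ?_) ⟨1, by simp [Finset.mem_Icc]; omega⟩
  rw [Finset.mem_Icc] at hj
  exact hpos _ (take_mem_scen hs hj.1)

lemma sumPrefix_nil (ν : List A → ℝ) : sumPrefix ν ([] : List A) = 0 := by simp [sumPrefix]

lemma sumPrefix_dropLast (ν : List A → ℝ) {s : List A} (hne : s ≠ []) :
    sumPrefix ν s = sumPrefix ν s.dropLast + ν s := by
  have h1 : 1 ≤ s.length := List.length_pos_iff.mpr hne
  obtain ⟨n, hn⟩ : ∃ n, s.length = n + 1 := ⟨s.length - 1, by omega⟩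
  have hdl : s.dropLast.length = n := by
    rw [List.length_dropLast]; omega
  have htake : ∀ j ≤ n, s.dropLast.take j = s.take j := by
    intro j hjn
    rw [List.dropLast_eq_take, List.take_take]
    congr 1; omega
  unfold sumPrefix
  rw [hn, hdl, Finset.sum_Icc_succ_top (by omega : 1 ≤ n + 1)]
  have hlast : s.take (n+1) = s := by rw [← hn, List.take_length]
  rw [hlast]
  congr 1
  exact Finset.sum_congr rfl fun j hj => by
    rw [Finset.mem_Icc] at hj; rw [htake j hj.2]

lemma V_pos {V : List A → ℝ} (hV0 : V [] = 0)
    (hstrict : ∀ s ∈ scenarios A L, V s.dropLast < V s) :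
    ∀ s ∈ scenarios A L, 0 < V s := by
  suffices h : ∀ n, ∀ s ∈ scenarios A L, s.length ≤ n → 0 < V s by
    intro s hs; exact h s.length s hs le_rfl
  intro n
  induction n with
  | zero =>
    intro s hs h0
    have := List.length_pos_iff.mpr ((mem_scenarios A L s).mp hs).1
    omega
  | succ n ih =>
    intro s hs hlen
    have h := hstrict s hs
    by_cases hd : s.dropLast = []
    · rw [hd, hV0] at h; exact h
    · have hdm := dropLast_mem hs hd
      have hl : s.dropLast.length ≤ n := by
        rw [List.length_dropLast]
        have := List.length_pos_iff.mpr ((mem_scenarios A L s).mp hs).1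
        omega
      have := ih s.dropLast hdm hl
      linarith

end Aux

section Scalar

lemma scalar_key {t v : ℝ} (ht : 0 < t) (hv : 0 < v) : v - t ≤ v * Real.log (v / t) := by
  have h := Real.log_le_sub_one_of_pos (div_pos ht hv)
  have hlog : Real.log (v / t) = - Real.log (t / v) := by rw [← Real.log_inv, inv_div]
  have hvt : v * (t / v) = t := by field_simp
  rw [hlog]
  nlinarith [h, hv]

lemma scalar_sqrt {t v : ℝ} (ht : 0 < t) (hv : 0 < v) :
    (Real.sqrt t - Real.sqrt v)^2 ≤ v * Real.log (v / t) + t - v := by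
  have hdiv : 0 < t / v := div_pos ht hv
  have h1 : Real.log (Real.sqrt (t/v)) ≤ Real.sqrt (t/v) - 1 :=
    Real.log_le_sub_one_of_pos (Real.sqrt_pos.mpr hdiv)
  rw [Real.log_sqrt hdiv.le, Real.sqrt_div ht.le] at h1
  have hsv : 0 < Real.sqrt v := Real.sqrt_pos.mpr hv
  have hst : 0 ≤ Real.sqrt t := Real.sqrt_nonneg t
  have hvv : Real.sqrt v * Real.sqrt v = v := Real.mul_self_sqrt hv.le
  have htt : Real.sqrt t * Real.sqrt t = t := Real.mul_self_sqrt ht.le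
  have h4 : Real.log (t/v) * Real.sqrt v ≤ 2*Real.sqrt t - 2*Real.sqrt v := by
    have h2 := mul_le_mul_of_nonneg_right h1 hsv.le
    rw [sub_mul, div_mul_cancel₀ _ hsv.ne'] at h2
    linarith [h2]
  have hlog : Real.log (v / t) = - Real.log (t / v) := by rw [← Real.log_inv, inv_div]
  rw [hlog]
  nlinarith [mul_le_mul_of_nonneg_right h4 hsv.le]

lemma jensen_log {ι : Type*} (s : Finset ι) (w z : ι → ℝ) (hw : ∀ i ∈ s, 0 < w i)
    (hz : ∀ i ∈ s, 0 < z i) (hne : s.Nonempty) :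
    ∑ i ∈ s, (w i / ∑ j ∈ s, w j) * Real.log (z i)
      ≤ Real.log (∑ i ∈ s, (w i / ∑ j ∈ s, w j) * z i) := by
  set W := ∑ j ∈ s, w j with hW
  have hWpos : 0 < W := Finset.sum_pos hw hne
  have hw' : ∀ i ∈ s, 0 ≤ w i / W := fun i hi => div_nonneg (hw i hi).le hWpos.le
  have hsum1 : ∑ i ∈ s, w i / W = 1 := by
    rw [← Finset.sum_div]; exact div_self hWpos.ne'
  have hgm := Real.geom_mean_le_arith_mean_weighted s (fun i => w i / W) z hw' hsum1
    (fun i hi => (hz i hi).le)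
  have hprodpos : 0 < ∏ i ∈ s, z i ^ (w i / W) :=
    Finset.prod_pos fun i hi => Real.rpow_pos_of_pos (hz i hi) _
  have hlogprod : Real.log (∏ i ∈ s, z i ^ (w i / W))
      = ∑ i ∈ s, (w i / W) * Real.log (z i) := by
    rw [Real.log_prod (fun i hi => (Real.rpow_pos_of_pos (hz i hi) _).ne')]
    exact Finset.sum_congr rfl fun i hi => Real.log_rpow (hz i hi) _
  calc ∑ i ∈ s, (w i / W) * Real.log (z i)
      = Real.log (∏ i ∈ s, z i ^ (w i / W)) := hlogprod.symm
    _ ≤ Real.log (∑ i ∈ s, (w i / W) * z i) := Real.log_le_log hprodpos hgm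

end Scalar
section Mid

variable {L : ℕ}

/-- Total conditional weight of scenarios extending `p`. -/
noncomputable def Cw (L : ℕ) (P : List A → ℝ) (p : List A) : ℝ :=
  ∑ s' ∈ (scenarios A L).filter (fun s' => p <+: s'), P s'

/-- KL-type Lyapunov function. -/
noncomputable def Dfun (L : ℕ) (P V ν : List A → ℝ) : ℝ :=
  ∑ p ∈ scenarios A L,
    Cw L P p * ((V p - V p.dropLast) * Real.log ((V p - V p.dropLast) / ν p))

/-- The multiplicative EM update relation. -/
def Upd (L : ℕ) (P V ν ν' : List A → ℝ) : Prop :=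
  ∀ s ∈ scenarios A L,
    ν' s = ν s * (∑ s' ∈ (scenarios A L).filter (fun s' => s <+: s'),
      P s' * (V s' / sumPrefix ν s')) / Cw L P s

lemma Cw_pos {P : List A → ℝ} (hP : ∀ s ∈ scenarios A L, 0 < P s) {s : List A}
    (hs : s ∈ scenarios A L) : 0 < Cw L P s :=
  Finset.sum_pos (fun i hi => hP i (Finset.mem_of_mem_filter i hi))
    ⟨s, self_mem_filter hs (List.prefix_refl s)⟩

lemma assoc_muFP (P V ν : List A → ℝ) (μ : ℕ → List A → ℝ)
    (hμ : ∀ i : ℕ, ∀ s ∈ scenarios A L, μ i s = muFP V ν i s)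
    {s : List A} (hs : s ∈ scenarios A L) :
    assocVal (scenarios A L) P μ s
      = ν s * (∑ s' ∈ (scenarios A L).filter (fun s' => s <+: s'),
          P s' * (V s' / sumPrefix ν s')) / Cw L P s := by
  unfold assocVal Cw
  congr 1
  rw [Finset.mul_sum]
  refine Finset.sum_congr rfl fun s' hs' => ?_
  rw [Finset.mem_filter] at hs'
  have h1 : 1 ≤ s.length := List.length_pos_iff.mpr ((mem_scenarios A L s).mp hs).1
  have h2 : s.length ≤ s'.length := hs'.2.length_le
  have h3 : s'.take s.length = s := (List.prefix_iff_eq_take.mp hs'.2).symm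
  rw [hμ _ _ hs'.1]
  unfold muFP
  rw [if_pos ⟨h1, h2⟩, h3]
  ring

lemma upd_pos {P V ν ν' : List A → ℝ} (hP : ∀ s ∈ scenarios A L, 0 < P s)
    (hν : ∀ p ∈ scenarios A L, 0 < ν p) (hV : ∀ s ∈ scenarios A L, 0 < V s)
    (hupd : Upd L P V ν ν') : ∀ p ∈ scenarios A L, 0 < ν' p := by
  intro p hp
  rw [hupd p hp]
  have hW : 0 < ∑ s' ∈ (scenarios A L).filter (fun s' => p <+: s'),
      P s' * (V s' / sumPrefix ν s') := by
    refine Finset.sum_pos (fun i hi => ?_) ⟨p, self_mem_filter hp (List.prefix_refl p)⟩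
    have him := Finset.mem_of_mem_filter i hi
    exact mul_pos (hP i him) (div_pos (hV i him) (sumPrefix_pos hν him))
  exact div_pos (mul_pos (hν p hp) hW) (Cw_pos hP hp)

lemma mass_eq {P V ν ν' : List A → ℝ} (hP : ∀ s ∈ scenarios A L, 0 < P s)
    (hT : ∀ s ∈ scenarios A L, sumPrefix ν s ≠ 0) (hupd : Upd L P V ν ν') :
    ∑ s ∈ scenarios A L, P s * sumPrefix ν' s = ∑ s ∈ scenarios A L, P s * V s := by
  have step1 : ∑ s ∈ scenarios A L, P s * sumPrefix ν' s
      = ∑ p ∈ scenarios A L,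
          ∑ s' ∈ (scenarios A L).filter (fun s' => p <+: s'), P s' * ν' p := by
    rw [← sum_take_swap (L := L) (fun s p => P s * ν' p)]
    exact Finset.sum_congr rfl fun s _ => Finset.mul_sum _ _ _
  have step2 : ∀ p ∈ scenarios A L,
      ∑ s' ∈ (scenarios A L).filter (fun s' => p <+: s'), P s' * ν' p
        = ∑ s' ∈ (scenarios A L).filter (fun s' => p <+: s'),
            ν p * (P s' * (V s' / sumPrefix ν s')) := by
    intro p hp
    rw [← Finset.sum_mul, ← Finset.mul_sum, hupd p hp]
    have hC := (Cw_pos hP hp).ne'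
    unfold Cw at *
    field_simp
  rw [step1, Finset.sum_congr rfl step2,
    ← sum_take_swap (L := L) (fun s p => ν p * (P s * (V s / sumPrefix ν s)))]
  refine Finset.sum_congr rfl fun s hs => ?_
  have hTs := hT s hs
  rw [← Finset.sum_mul]
  show sumPrefix ν s * _ = _
  field_simp

lemma E_nonneg {P V ν : List A → ℝ} (hP : ∀ s ∈ scenarios A L, 0 ≤ P s)
    (hV : ∀ s ∈ scenarios A L, 0 < V s)
    (hT : ∀ s ∈ scenarios A L, 0 < sumPrefix ν s)
    (hmass : ∑ s ∈ scenarios A L, P s * sumPrefix ν s = ∑ s ∈ scenarios A L, P s * V s) :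
    0 ≤ ∑ s ∈ scenarios A L, P s * (V s * Real.log (V s / sumPrefix ν s)) := by
  have key : ∀ s ∈ scenarios A L,
      P s * (V s - sumPrefix ν s) ≤ P s * (V s * Real.log (V s / sumPrefix ν s)) :=
    fun s hs => mul_le_mul_of_nonneg_left (scalar_key (hT s hs) (hV s hs)) (hP s hs)
  have h2 := Finset.sum_le_sum key
  have h3 : ∑ s ∈ scenarios A L, P s * (V s - sumPrefix ν s) = 0 := by
    simp only [mul_sub]
    rw [Finset.sum_sub_distrib, hmass, sub_self]
  linarith

lemma D_decrement {P V ν ν' : List A → ℝ} (hP : ∀ s ∈ scenarios A L, 0 < P s)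
    (hνpos : ∀ p ∈ scenarios A L, 0 < ν p)
    (hVpos : ∀ s ∈ scenarios A L, 0 < V s) (hV0 : V [] = 0)
    (hcore : ∀ p ∈ scenarios A L, 0 < V p - V p.dropLast)
    (hupd : Upd L P V ν ν') :
    ∑ s ∈ scenarios A L, P s * (V s * Real.log (V s / sumPrefix ν s))
      ≤ Dfun L P V ν - Dfun L P V ν' := by
  have hν'pos := upd_pos hP hνpos hVpos hupd
  have hdiff : Dfun L P V ν - Dfun L P V ν'
      = ∑ p ∈ scenarios A L,
          Cw L P p * ((V p - V p.dropLast) * Real.log (ν' p / ν p)) := by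
    unfold Dfun
    rw [← Finset.sum_sub_distrib]
    refine Finset.sum_congr rfl fun p hp => ?_
    have h1 := (hcore p hp).ne'
    have h2 := (hνpos p hp).ne'
    have h3 := (hν'pos p hp).ne'
    rw [Real.log_div h1 h2, Real.log_div h1 h3, Real.log_div h3 h2]
    ring
  rw [hdiff]
  have hterm : ∀ p ∈ scenarios A L,
      ∑ s' ∈ (scenarios A L).filter (fun s' => p <+: s'),
          (V p - V p.dropLast) * (P s' * Real.log (V s' / sumPrefix ν s'))
        ≤ Cw L P p * ((V p - V p.dropLast) * Real.log (ν' p / ν p)) := by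
    intro p hp
    have hC := Cw_pos hP hp
    have hg := hcore p hp
    have hrat : ν' p / ν p
        = (∑ s' ∈ (scenarios A L).filter (fun s' => p <+: s'),
            P s' * (V s' / sumPrefix ν s')) / Cw L P p := by
      rw [hupd p hp]
      field_simp [(hνpos p hp).ne']
    have hj := jensen_log ((scenarios A L).filter (fun s' => p <+: s')) P
      (fun s' => V s' / sumPrefix ν s')
      (fun i hi => hP i (Finset.mem_of_mem_filter i hi))
      (fun i hi => div_pos (hVpos i (Finset.mem_of_mem_filter i hi))
        (sumPrefix_pos hνpos (Finset.mem_of_mem_filter i hi)))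
      ⟨p, self_mem_filter hp (List.prefix_refl p)⟩
    have hWC : ∑ i ∈ (scenarios A L).filter (fun s' => p <+: s'),
        (P i / Cw L P p) * (V i / sumPrefix ν i) = ν' p / ν p := by
      rw [hrat, Finset.sum_div]
      exact Finset.sum_congr rfl fun i _ => by rw [div_mul_eq_mul_div]
    rw [show (∑ j ∈ (scenarios A L).filter (fun s' => p <+: s'), P j) = Cw L P p from rfl,
      hWC] at hj
    have hmul := mul_le_mul_of_nonneg_left hj (mul_pos hC hg).le
    calc ∑ s' ∈ (scenarios A L).filter (fun s' => p <+: s'),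
          (V p - V p.dropLast) * (P s' * Real.log (V s' / sumPrefix ν s'))
        = (Cw L P p * (V p - V p.dropLast)) *
            ∑ i ∈ (scenarios A L).filter (fun s' => p <+: s'),
              (P i / Cw L P p) * Real.log (V i / sumPrefix ν i) := by
          rw [Finset.mul_sum]
          refine Finset.sum_congr rfl fun i _ => ?_
          field_simp
      _ ≤ (Cw L P p * (V p - V p.dropLast)) * Real.log (ν' p / ν p) := hmul
      _ = Cw L P p * ((V p - V p.dropLast) * Real.log (ν' p / ν p)) := by ring
  calc ∑ s ∈ scenarios A L, P s * (V s * Real.log (V s / sumPrefix ν s))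
      = ∑ s ∈ scenarios A L, ∑ j ∈ Finset.Icc 1 s.length,
          (V (s.take j) - V ((s.take j).dropLast)) *
            (P s * Real.log (V s / sumPrefix ν s)) := by
        refine Finset.sum_congr rfl fun s hs => ?_
        rw [← Finset.sum_mul, telescope V hV0 hs]
        ring
    _ = ∑ p ∈ scenarios A L,
          ∑ s' ∈ (scenarios A L).filter (fun s' => p <+: s'),
            (V p - V p.dropLast) * (P s' * Real.log (V s' / sumPrefix ν s')) :=
        sum_take_swap (L := L)
          (fun s p => (V p - V p.dropLast) * (P s * Real.log (V s / sumPrefix ν s)))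
    _ ≤ _ := Finset.sum_le_sum hterm

end Mid

/-- **Convergence of the core-attribution fixed-point algorithm (Prop. 4).**
Starting from any internal attribution `μ⁽⁰⁾` whose associated valuation is
positive, the iteration `ν⁽ᵏ⁺¹⁾ = ν_P^{μ⁽ᵏ⁾}`, `μ⁽ᵏ⁺¹⁾ = μ_{ν⁽ᵏ⁺¹⁾}` converges
pointwise to the core (additive) valuation `V(s) − V(s⁻)`. -/
theorem fixed_point_iteration_converges_to_core
    {A : Type} [Fintype A] [DecidableEq A] [Nonempty A] (L : ℕ) (hL : 1 ≤ L)
    (P : List A → ℝ) (hP : IsProb (scenarios A L) P)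
    (hPfull : FullSupport (scenarios A L) P)
    (V : List A → ℝ) (hV0 : V [] = 0)
    (hmono : ∀ s ∈ scenarios A L, ∀ s' ∈ scenarios A L, s <+: s' → V s ≤ V s')
    (hstrict : ∀ s ∈ scenarios A L, V s.dropLast < V s)
    (μseq : ℕ → ℕ → List A → ℝ) (νseq : ℕ → List A → ℝ)
    (h0 : IsInternalAttr (scenarios A L) V (μseq 0))
    (h0pos : ∀ s ∈ scenarios A L, 0 < assocVal (scenarios A L) P (μseq 0) s)
    (hν : ∀ k : ℕ, ∀ s ∈ scenarios A L,
      νseq (k + 1) s = assocVal (scenarios A L) P (μseq k) s)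
    (hμ : ∀ k : ℕ, ∀ i : ℕ, ∀ s ∈ scenarios A L,
      μseq (k + 1) i s = muFP V (νseq (k + 1)) i s) :
    ∀ s ∈ scenarios A L,
      Filter.Tendsto (fun k => νseq k s) Filter.atTop (nhds (V s - V s.dropLast)) := by
  have hPpos : ∀ t ∈ scenarios A L, 0 < P t := hPfull
  have hVpos : ∀ t ∈ scenarios A L, 0 < V t := V_pos hV0 hstrict
  have hcore : ∀ t ∈ scenarios A L, 0 < V t - V t.dropLast :=
    fun t ht => sub_pos.mpr (hstrict t ht)
  set ν : ℕ → List A → ℝ := fun k => νseq (k+1) with hνdef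
  have hupd : ∀ k, Upd L P V (ν k) (ν (k+1)) := by
    intro k t ht
    have h1 : νseq (k+2) t = assocVal (scenarios A L) P (μseq (k+1)) t := hν (k+1) t ht
    show νseq (k+2) t = _
    rw [h1]
    exact assoc_muFP P V (νseq (k+1)) (μseq (k+1)) (hμ k) ht
  have hpos : ∀ k, ∀ t ∈ scenarios A L, 0 < ν k t := by
    intro k
    induction k with
    | zero =>
      intro t ht
      have : ν 0 t = assocVal (scenarios A L) P (μseq 0) t := hν 0 t ht
      rw [this]; exact h0pos t ht
    | succ n ih => exact upd_pos hPpos ih hVpos (hupd n)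
  have hmass : ∀ k, ∑ t ∈ scenarios A L, P t * sumPrefix (ν (k+1)) t
      = ∑ t ∈ scenarios A L, P t * V t :=
    fun k => mass_eq hPpos (fun t ht => (sumPrefix_pos (hpos k) ht).ne') (hupd k)
  set M := ∑ t ∈ scenarios A L, P t * V t with hM
  -- upper bound on ν
  have hub : ∀ k, ∀ p ∈ scenarios A L, ν (k+1) p ≤ M / P p := by
    intro k p hp
    have h1 : P p * sumPrefix (ν (k+1)) p ≤ M :=
      le_of_le_of_eq (Finset.single_le_sum (f := fun t => P t * sumPrefix (ν (k+1)) t)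
        (fun t ht => mul_nonneg (hPpos t ht).le (sumPrefix_pos (hpos (k+1)) ht).le) hp)
        (hmass k)
    have h2 : ν (k+1) p ≤ sumPrefix (ν (k+1)) p := by
      rw [sumPrefix_dropLast (ν (k+1)) ((mem_scenarios A L p).mp hp).1]
      have hnn : 0 ≤ sumPrefix (ν (k+1)) p.dropLast := by
        by_cases hd : p.dropLast = []
        · rw [hd, sumPrefix_nil]
        · exact (sumPrefix_pos (hpos (k+1)) (dropLast_mem hp hd)).le
      linarith
    have hPp := hPpos p hp
    rw [le_div_iff₀ hPp]
    nlinarith [mul_le_mul_of_nonneg_left h2 hPp.le]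
  -- Lyapunov sequence
  set D : ℕ → ℝ := fun k => Dfun L P V (ν (k+1)) with hD
  set E : ℕ → ℝ := fun k =>
    ∑ t ∈ scenarios A L, P t * (V t * Real.log (V t / sumPrefix (ν (k+1)) t)) with hE
  have hdec : ∀ k, E k ≤ D k - D (k+1) := fun k =>
    D_decrement hPpos (hpos (k+1)) hVpos hV0 hcore (hupd (k+1))
  have hE0 : ∀ k, 0 ≤ E k := fun k =>
    E_nonneg (fun t ht => (hPpos t ht).le) hVpos
      (fun t ht => sumPrefix_pos (hpos (k+1)) ht) (hmass k)
  have hanti : Antitone D := antitone_nat_of_succ_le fun k => by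
    have h1 := hdec k; have h2 := hE0 k; linarith
  have hDlb : ∀ k,
      (∑ p ∈ scenarios A L, Cw L P p * ((V p - V p.dropLast) *
        Real.log ((V p - V p.dropLast) * P p / M))) ≤ D k := by
    intro k
    have hMpos : 0 < M := by
      rw [hM]
      refine Finset.sum_pos (fun t ht => mul_pos (hPpos t ht) (hVpos t ht)) ?_
      obtain ⟨a⟩ := ‹Nonempty A›
      exact ⟨[a], by rw [mem_scenarios]; exact ⟨by simp, by simpa using hL⟩⟩
    refine Finset.sum_le_sum fun p hp => ?_
    refine mul_le_mul_of_nonneg_left ?_ (Cw_pos hPpos hp).le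
    refine mul_le_mul_of_nonneg_left ?_ (hcore p hp).le
    have hgp := hcore p hp
    have hPp := hPpos p hp
    have hν1 := hpos (k+1) p hp
    refine Real.log_le_log (by positivity) ?_
    rw [div_le_div_iff₀ hMpos hν1]
    have h3 := (le_div_iff₀ hPp).mp (hub k p hp)
    nlinarith
  obtain ⟨d, hd⟩ : ∃ d, Filter.Tendsto D Filter.atTop (nhds d) :=
    ⟨⨅ k, D k, tendsto_atTop_ciInf hanti ⟨_, by rintro x ⟨k, rfl⟩; exact hDlb k⟩⟩
  have hdshift : Filter.Tendsto (fun k => D (k+1)) Filter.atTop (nhds d) :=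
    (Filter.tendsto_add_atTop_iff_nat 1).mpr hd
  have hEto0 : Filter.Tendsto E Filter.atTop (nhds 0) := by
    have hDsub : Filter.Tendsto (fun k => D k - D (k+1)) Filter.atTop (nhds 0) := by
      have := hd.sub hdshift; simpa using this
    exact squeeze_zero hE0 hdec hDsub
  -- sum of prefixes converges to V
  have hTconv : ∀ t ∈ scenarios A L,
      Filter.Tendsto (fun k => sumPrefix (ν (k+1)) t) Filter.atTop (nhds (V t)) := by
    intro t ht
    have hTkpos : ∀ k, 0 < sumPrefix (ν (k+1)) t := fun k => sumPrefix_pos (hpos (k+1)) ht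
    have hψnn : ∀ k, 0 ≤ V t * Real.log (V t / sumPrefix (ν (k+1)) t)
        + sumPrefix (ν (k+1)) t - V t := fun k => by
      have := scalar_key (hTkpos k) (hVpos t ht); linarith
    have hterm : ∀ k, P t * (V t * Real.log (V t / sumPrefix (ν (k+1)) t)
        + sumPrefix (ν (k+1)) t - V t) ≤ E k := by
      intro k
      have hz : ∑ u ∈ scenarios A L, P u * (sumPrefix (ν (k+1)) u - V u) = 0 := by
        simp only [mul_sub]
        rw [Finset.sum_sub_distrib, hmass k, sub_self]
      have hEψ : E k = ∑ u ∈ scenarios A L,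
          P u * (V u * Real.log (V u / sumPrefix (ν (k+1)) u)
            + sumPrefix (ν (k+1)) u - V u) := by
        rw [hE]
        calc ∑ t ∈ scenarios A L, P t * (V t * Real.log (V t / sumPrefix (ν (k+1)) t))
            = (∑ t ∈ scenarios A L, P t * (V t * Real.log (V t / sumPrefix (ν (k+1)) t)))
              + ∑ u ∈ scenarios A L, P u * (sumPrefix (ν (k+1)) u - V u) := by
              rw [hz, add_zero]
          _ = _ := by
              rw [← Finset.sum_add_distrib]
              exact Finset.sum_congr rfl fun u _ => by ring
      rw [hEψ]
      refine Finset.single_le_sum (f := fun u => P u * (V u * Real.log (V u / sumPrefix (ν (k+1)) u)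
          + sumPrefix (ν (k+1)) u - V u)) (fun u hu => mul_nonneg (hPpos u hu).le ?_) ht
      have := scalar_key (sumPrefix_pos (hpos (k+1)) hu) (hVpos u hu); linarith
    have hψ0 : Filter.Tendsto (fun k => V t * Real.log (V t / sumPrefix (ν (k+1)) t)
        + sumPrefix (ν (k+1)) t - V t) Filter.atTop (nhds 0) := by
      have h1 : Filter.Tendsto (fun k => P t * (V t * Real.log (V t / sumPrefix (ν (k+1)) t)
          + sumPrefix (ν (k+1)) t - V t)) Filter.atTop (nhds 0) :=
        squeeze_zero (fun k => mul_nonneg (hPpos t ht).le (hψnn k)) hterm hEto0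
      have h2 := h1.const_mul (P t)⁻¹
      rw [mul_zero] at h2
      have heq : (fun k => (P t)⁻¹ * (P t * (V t * Real.log (V t / sumPrefix (ν (k+1)) t)
          + sumPrefix (ν (k+1)) t - V t)))
          = fun k => V t * Real.log (V t / sumPrefix (ν (k+1)) t)
            + sumPrefix (ν (k+1)) t - V t := by
        funext k
        rw [inv_mul_cancel_left₀ (hPpos t ht).ne']
      rwa [heq] at h2
    have hsq : Filter.Tendsto
        (fun k => (Real.sqrt (sumPrefix (ν (k+1)) t) - Real.sqrt (V t))^2)
        Filter.atTop (nhds 0) :=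
      squeeze_zero (fun k => sq_nonneg _) (fun k => scalar_sqrt (hTkpos k) (hVpos t ht)) hψ0
    have habs : Filter.Tendsto
        (fun k => |Real.sqrt (sumPrefix (ν (k+1)) t) - Real.sqrt (V t)|)
        Filter.atTop (nhds 0) := by
      have h1 := (Real.continuous_sqrt.tendsto 0).comp hsq
      rw [Real.sqrt_zero] at h1
      have heq : (fun k => |Real.sqrt (sumPrefix (ν (k+1)) t) - Real.sqrt (V t)|)
          = Real.sqrt ∘ (fun k => (Real.sqrt (sumPrefix (ν (k+1)) t) - Real.sqrt (V t))^2) := by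
        funext k
        simp [Real.sqrt_sq_eq_abs]
      rwa [heq]
    have hx : Filter.Tendsto (fun k => Real.sqrt (sumPrefix (ν (k+1)) t) - Real.sqrt (V t))
        Filter.atTop (nhds 0) := by
      have hneg : Filter.Tendsto
          (fun k => -|Real.sqrt (sumPrefix (ν (k+1)) t) - Real.sqrt (V t)|)
          Filter.atTop (nhds 0) := by
        have := habs.neg; simpa using this
      exact tendsto_of_tendsto_of_tendsto_of_le_of_le hneg habs
        (fun k => neg_abs_le _) (fun k => le_abs_self _)
    have hsqrtT : Filter.Tendsto (fun k => Real.sqrt (sumPrefix (ν (k+1)) t))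
        Filter.atTop (nhds (Real.sqrt (V t))) := by
      have := hx.add_const (Real.sqrt (V t))
      simpa using this
    have hfin := hsqrtT.mul hsqrtT
    have heq1 : (fun k => Real.sqrt (sumPrefix (ν (k+1)) t)
        * Real.sqrt (sumPrefix (ν (k+1)) t)) = fun k => sumPrefix (ν (k+1)) t :=
      funext fun k => Real.mul_self_sqrt (hTkpos k).le
    rw [heq1, Real.mul_self_sqrt (hVpos t ht).le] at hfin
    exact hfin
  intro s hs
  have hdl : Filter.Tendsto (fun k => sumPrefix (ν (k+1)) s.dropLast)
      Filter.atTop (nhds (V s.dropLast)) := by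
    by_cases hd : s.dropLast = []
    · rw [hd, hV0]
      simpa [sumPrefix_nil] using (tendsto_const_nhds :
        Filter.Tendsto (fun _ : ℕ => (0:ℝ)) Filter.atTop (nhds 0))
    · exact hTconv _ (dropLast_mem hs hd)
  have hmain : Filter.Tendsto (fun k => ν (k+1) s) Filter.atTop
      (nhds (V s - V s.dropLast)) := by
    have heq : (fun k => ν (k+1) s)
        = fun k => sumPrefix (ν (k+1)) s - sumPrefix (ν (k+1)) s.dropLast :=
      funext fun k => by
        rw [sumPrefix_dropLast (ν (k+1)) ((mem_scenarios A L s).mp hs).1]; ring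
    rw [heq]
    exact (hTconv s hs).sub hdl
  have hmain2 : Filter.Tendsto (fun k => νseq (k+2) s) Filter.atTop
      (nhds (V s - V s.dropLast)) := hmain
  exact (Filter.tendsto_add_atTop_iff_nat 2).mp hmain2

end CoreAttr
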